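/- The Hermite form is unique: if A ∈ S^{n×n} has full row rank and U·A = H, V·A = G with U, V unimodular and H, G in Hermite form, then H = G and U = V. -/

import Mathlib

/-!
Put `W = U V⁻¹`, so that `W G = H`. The `D`-degree is additive, so `S` has no zero divisors;
as the diagonals of `H` and `G` are nonzero, comparing columns from left to right shows that `W`
and `W⁻¹` are upper triangular. Their diagonal entries are then mutually inverse, hence of degree
`0`, i.e. constants, and these constants are `1` because the diagonals of `H` and `G` are monic.
Finally every entry of `(W - 1) G = H - G` has degree below the diagonal entry of `G` in its
column, which, again column by column, forces `W = 1`.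
-/

/-- Abstract presentation of a skew (Ore/differential) polynomial ring `S = K[D; δ]`:
`S` is a ring containing `K` via `ι`, with a distinguished element `D` satisfying the
commutation rule `D * a = a * D + δ a`, and every element of `S` is (uniquely) a finite
sum `∑ aₙ Dⁿ`, with coefficients `coeff` supported on `supp`. -/
structure DiffPolyRing (K : Type) [CommRing K] (S : Type) [Ring S] (δ : K → K) where
  ι : K →+* S
  D : S
  comm_rule : ∀ a : K, D * ι a = ι a * D + ι (δ a)
  coeff : S → ℕ → K
  supp : S → Finset ℕ
  mem_supp : ∀ f n, n ∈ supp f ↔ coeff f n ≠ 0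
  coeff_add : ∀ f g n, coeff (f + g) n = coeff f n + coeff g n
  coeff_ext : ∀ f g : S, (∀ n, coeff f n = coeff g n) → f = g
  coeff_monomial : ∀ (a : K) (i n : ℕ), coeff (ι a * D ^ i) n = if n = i then a else 0
  repr_sum : ∀ f : S, f = ∑ n ∈ supp f, ι (coeff f n) * D ^ n

namespace DiffPolyRing

variable {K S : Type} [CommRing K] [Ring S] {δ : K → K}

/-- Degree in the variable `D`, with `degD 0 = ⊥` (i.e. `-∞`). -/
noncomputable def degD (R : DiffPolyRing K S δ) (f : S) : WithBot ℕ := (R.supp f).max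

/-- Degree in `D` as a natural number (`0` for the zero polynomial). -/
noncomputable def natDegD (R : DiffPolyRing K S δ) (f : S) : ℕ := (R.degD f).unbotD 0

/-- `f` is monic: its leading coefficient (in `D`) is `1`. -/
noncomputable def Monic (R : DiffPolyRing K S δ) (f : S) : Prop :=
  R.coeff f (R.natDegD f) = 1

/-- `H` is in Hermite form: upper triangular, monic diagonal entries, and each
off-diagonal entry has `D`-degree strictly less than the diagonal entry below it. -/
noncomputable def HermiteForm (R : DiffPolyRing K S δ) {n : ℕ}
    (H : Matrix (Fin n) (Fin n) S) : Prop :=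
  (∀ i j, j < i → H i j = 0) ∧ (∀ i, R.Monic (H i i)) ∧
    (∀ i j, i < j → R.degD (H i j) < R.degD (H j j))

/-- The rows of `A` are left `S`-linearly independent. -/
def FullRowRank {n : ℕ} (A : Matrix (Fin n) (Fin n) S) : Prop :=
  ∀ c : Fin n → S, (∀ j, (∑ i, c i * A i j) = 0) → c = 0

end DiffPolyRing

namespace Matrix

variable {m α : Type*} [LinearOrder m] [Fintype m] [NonUnitalNonAssocSemiring α]

theorem mul_apply_eq_of_isUpperTriangular {X M : Matrix m m α} (hM : M.IsUpperTriangular)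
    {i k : m} (hX : ∀ l < k, X i l = 0) : (X * M) i k = X i k * M k k := by
  rw [mul_apply]
  refine Finset.sum_eq_single k (fun l _ hlk => ?_) (fun hk => absurd (Finset.mem_univ k) hk)
  rcases hlk.lt_or_gt with hlt | hgt
  · rw [hX l hlt, zero_mul]
  · rw [hM hgt, mul_zero]

theorem IsUpperTriangular.mul_apply_self {X M : Matrix m m α} (hX : X.IsUpperTriangular)
    (hM : M.IsUpperTriangular) (i : m) : (X * M) i i = X i i * M i i :=
  mul_apply_eq_of_isUpperTriangular hM fun _ hl => hX hl

theorem isUpperTriangular_of_mul_eq [WellFoundedLT m] [NoZeroDivisors α] {X M N : Matrix m m α}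
    (hXM : X * M = N) (hM : M.IsUpperTriangular) (hMd : ∀ k, M k k ≠ 0)
    (hN : N.IsUpperTriangular) : X.IsUpperTriangular := by
  intro i k hki
  induction k using WellFoundedLT.induction with
  | _ k ih =>
    have hcol := mul_apply_eq_of_isUpperTriangular (X := X) hM
      (fun l hl => ih l hl (hl.trans hki))
    rw [hXM, hN hki] at hcol
    exact (mul_eq_zero.1 hcol.symm).resolve_right (hMd k)

end Matrix

namespace DiffPolyRing

variable {K S : Type} [CommRing K] [Ring S] {δ : K → K} (R : DiffPolyRing K S δ)

def coeffHom (n : ℕ) : S →+ K :=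
  AddMonoidHom.mk' (R.coeff · n) fun f g => R.coeff_add f g n

@[simp]
lemma coeff_zero (n : ℕ) : R.coeff 0 n = 0 := (R.coeffHom n).map_zero

lemma coeff_sub (f g : S) (n : ℕ) : R.coeff (f - g) n = R.coeff f n - R.coeff g n :=
  (R.coeffHom n).map_sub f g

lemma coeff_sum {α : Type*} (s : Finset α) (f : α → S) (n : ℕ) :
    R.coeff (∑ i ∈ s, f i) n = ∑ i ∈ s, R.coeff (f i) n :=
  map_sum (R.coeffHom n) f s

lemma coeff_ι (a : K) (n : ℕ) : R.coeff (R.ι a) n = if n = 0 then a else 0 := by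
  simpa using R.coeff_monomial a 0 n

include R in
lemma δ_zero : δ 0 = 0 := by
  have h := congrArg (R.coeff · 0) (R.comm_rule 0)
  simp only [map_zero, mul_zero, zero_mul, zero_add, R.coeff_ι, R.coeff_zero] at h
  exact h.symm

lemma coeff_eq_zero_of_notMem_supp {f : S} {n : ℕ} (h : n ∉ R.supp f) : R.coeff f n = 0 :=
  not_not.1 fun hc => h ((R.mem_supp f n).2 hc)

lemma sum_supp_ite_eq (f : S) (φ : K → K) (hφ : φ 0 = 0) (m : ℕ) :
    ∑ n ∈ R.supp f, (if m = n then φ (R.coeff f n) else 0) = φ (R.coeff f m) := by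
  rw [Finset.sum_ite_eq]
  split_ifs with hm
  · rfl
  · rw [R.coeff_eq_zero_of_notMem_supp hm, hφ]

lemma coeff_ι_mul (a : K) (f : S) (m : ℕ) : R.coeff (R.ι a * f) m = a * R.coeff f m := by
  conv_lhs => rw [R.repr_sum f]
  simp_rw [Finset.mul_sum, ← mul_assoc, ← map_mul, R.coeff_sum, R.coeff_monomial]
  exact R.sum_supp_ite_eq f (a * ·) (mul_zero a) m

lemma coeff_D_mul_succ (f : S) (k : ℕ) :
    R.coeff (R.D * f) (k + 1) = R.coeff f k + δ (R.coeff f (k + 1)) := by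
  conv_lhs => rw [R.repr_sum f]
  simp_rw [Finset.mul_sum, ← mul_assoc, R.comm_rule, add_mul, mul_assoc, ← pow_succ',
    R.coeff_sum, R.coeff_add, R.coeff_monomial, Finset.sum_add_distrib, Nat.add_right_cancel_iff]
  exact congr_arg₂ (· + ·) (R.sum_supp_ite_eq f id rfl k)
    (R.sum_supp_ite_eq f δ R.δ_zero (k + 1))

lemma degD_le_iff_coeff_zero (f : S) (d : ℕ) :
    R.degD f ≤ d ↔ ∀ m, d < m → R.coeff f m = 0 := by
  simp only [degD, Finset.max_le_iff, R.mem_supp, ne_eq, Nat.cast_withBot, WithBot.coe_le_coe]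
  exact ⟨fun h m hm => not_not.1 fun hc => (h m hc).not_gt hm,
    fun h m hc => not_lt.1 fun hm => hc (h m hm)⟩

lemma coeff_eq_zero_of_degD_lt {f : S} {m : ℕ} (h : R.degD f < m) : R.coeff f m = 0 :=
  R.coeff_eq_zero_of_notMem_supp (Finset.notMem_of_max_lt_coe h)

lemma le_degD_of_coeff_ne_zero {f : S} {m : ℕ} (h : R.coeff f m ≠ 0) :
    (m : WithBot ℕ) ≤ R.degD f :=
  Finset.le_max ((R.mem_supp f m).2 h)

lemma degD_eq_bot_iff {f : S} : R.degD f = ⊥ ↔ f = 0 := by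
  simp only [degD, Finset.max_eq_bot, Finset.eq_empty_iff_forall_notMem, R.mem_supp, not_not]
  exact ⟨fun h => R.coeff_ext f 0 fun m => by simp [h], by rintro rfl; simp⟩

@[simp]
lemma degD_zero : R.degD 0 = ⊥ := R.degD_eq_bot_iff.2 rfl

lemma degD_eq_natDegD {f : S} (hf : f ≠ 0) : R.degD f = R.natDegD f := by
  obtain ⟨d, hd⟩ := WithBot.ne_bot_iff_exists.1 (mt R.degD_eq_bot_iff.1 hf)
  simp [natDegD, ← hd, Nat.cast_withBot]

lemma degD_le_natDegD (f : S) : R.degD f ≤ R.natDegD f := by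
  rcases eq_or_ne f 0 with rfl | hf
  · simp
  · rw [R.degD_eq_natDegD hf]

lemma natDegD_eq_of_degD_eq {f : S} {d : ℕ} (h : R.degD f = d) : R.natDegD f = d := by
  simp [natDegD, h]

lemma natDegD_le_of_degD_le {f : S} {d : ℕ} (h : R.degD f ≤ d) : R.natDegD f ≤ d := by
  rcases eq_or_ne f 0 with rfl | hf
  · simp [natDegD]
  · rw [R.degD_eq_natDegD hf] at h
    exact_mod_cast h

lemma le_natDegD_of_mem_supp {f : S} {i : ℕ} (hi : i ∈ R.supp f) : i ≤ R.natDegD f := by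
  have hle := (Finset.le_max hi).trans (R.degD_le_natDegD f)
  rwa [Nat.cast_withBot, WithBot.coe_le_coe] at hle

lemma bot_lt_degD {f : S} (hf : f ≠ 0) : ⊥ < R.degD f :=
  bot_lt_iff_ne_bot.2 (mt R.degD_eq_bot_iff.1 hf)

lemma degD_sub_lt {f g : S} {d : WithBot ℕ} (hf : R.degD f < d) (hg : R.degD g < d) :
    R.degD (f - g) < d := by
  have hsupp : R.supp (f - g) ⊆ R.supp f ∪ R.supp g := by
    intro m hm
    simp only [Finset.mem_union, R.mem_supp, R.coeff_sub] at hm ⊢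
    by_contra! h
    exact hm (by rw [h.1, h.2, sub_zero])
  refine (Finset.max_mono hsupp).trans_lt ?_
  rw [Finset.max_union]
  exact sup_lt_iff.2 ⟨hf, hg⟩

noncomputable def leadingCoeffD (f : S) : K := R.coeff f (R.natDegD f)

lemma leadingCoeffD_ne_zero {f : S} (hf : f ≠ 0) : R.leadingCoeffD f ≠ 0 :=
  (R.mem_supp f _).1 (Finset.mem_of_max (R.degD_eq_natDegD hf))

lemma ne_zero_of_monic [Nontrivial K] {f : S} (hf : R.Monic f) : f ≠ 0 := by
  rintro rfl
  exact zero_ne_one ((R.coeff_zero _).symm.trans hf)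

lemma degD_ι_le (a : K) : R.degD (R.ι a) ≤ (0 : ℕ) :=
  (R.degD_le_iff_coeff_zero _ 0).2 fun m hm => by rw [R.coeff_ι, if_neg hm.ne']

lemma natDegD_one : R.natDegD (1 : S) = 0 :=
  Nat.le_zero.1 (R.natDegD_le_of_degD_le (map_one R.ι ▸ R.degD_ι_le 1))

lemma eq_ι_coeff_zero {u : S} (hu : R.natDegD u = 0) : u = R.ι (R.coeff u 0) := by
  refine R.coeff_ext _ _ fun m => ?_
  rw [R.coeff_ι]
  split_ifs with hm
  · rw [hm]
  · refine R.coeff_eq_zero_of_degD_lt ((R.degD_le_natDegD u).trans_lt ?_)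
    rw [hu]
    exact_mod_cast Nat.pos_of_ne_zero hm

lemma degD_D_pow_mul_le {f : S} {d : ℕ} (hf : R.degD f ≤ d) (i : ℕ) :
    R.degD (R.D ^ i * f) ≤ (d + i : ℕ) := by
  induction i with
  | zero => simpa using hf
  | succ i ih =>
    rw [R.degD_le_iff_coeff_zero] at ih ⊢
    rintro (_ | k) hk
    · omega
    · rw [pow_succ', mul_assoc, R.coeff_D_mul_succ, ih k (by omega), ih (k + 1) (by omega),
        R.δ_zero, add_zero]

lemma coeff_D_pow_mul_add {f : S} {d : ℕ} (hf : R.degD f ≤ d) (i : ℕ) :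
    R.coeff (R.D ^ i * f) (d + i) = R.coeff f d := by
  induction i with
  | zero => simp
  | succ i ih =>
    have htop := R.coeff_eq_zero_of_degD_lt
      ((R.degD_D_pow_mul_le hf i).trans_lt (WithBot.coe_lt_coe.2 (Nat.lt_succ_self (d + i))))
    rw [pow_succ', mul_assoc, ← add_assoc, R.coeff_D_mul_succ, ih, htop, R.δ_zero, add_zero]

lemma coeff_mul (f g : S) (m : ℕ) :
    R.coeff (f * g) m = ∑ i ∈ R.supp f, R.coeff f i * R.coeff (R.D ^ i * g) m := by
  conv_lhs => rw [R.repr_sum f]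
  simp_rw [Finset.sum_mul, mul_assoc, R.coeff_sum, R.coeff_ι_mul]

lemma coeff_D_pow_mul_eq_zero (g : S) {i m : ℕ} (h : R.natDegD g + i < m) :
    R.coeff (R.D ^ i * g) m = 0 :=
  R.coeff_eq_zero_of_degD_lt
    ((R.degD_D_pow_mul_le (R.degD_le_natDegD g) i).trans_lt (WithBot.coe_lt_coe.2 h))

lemma degD_mul_le (f g : S) : R.degD (f * g) ≤ (R.natDegD f + R.natDegD g : ℕ) := by
  refine (R.degD_le_iff_coeff_zero _ _).2 fun m hm => ?_
  rw [R.coeff_mul]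
  refine Finset.sum_eq_zero fun i hi => ?_
  have := R.le_natDegD_of_mem_supp hi
  rw [R.coeff_D_pow_mul_eq_zero g (by omega), mul_zero]

lemma coeff_mul_natDegD_add (f g : S) :
    R.coeff (f * g) (R.natDegD f + R.natDegD g) = R.leadingCoeffD f * R.leadingCoeffD g := by
  rw [R.coeff_mul]
  refine (Finset.sum_congr rfl fun i hi => ?_).trans
    (R.sum_supp_ite_eq f (· * R.leadingCoeffD g) (zero_mul _) (R.natDegD f))
  rcases (R.le_natDegD_of_mem_supp hi).eq_or_lt with rfl | hlt
  · rw [if_pos rfl, add_comm, R.coeff_D_pow_mul_add (R.degD_le_natDegD g)]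
    rfl
  · rw [if_neg hlt.ne', R.coeff_D_pow_mul_eq_zero g (by omega), mul_zero]

section IsDomain

variable [IsDomain K]

lemma degD_mul {f g : S} (hf : f ≠ 0) (hg : g ≠ 0) :
    R.degD (f * g) = (R.natDegD f + R.natDegD g : ℕ) := by
  refine le_antisymm (R.degD_mul_le f g) (R.le_degD_of_coeff_ne_zero ?_)
  rw [R.coeff_mul_natDegD_add]
  exact mul_ne_zero (R.leadingCoeffD_ne_zero hf) (R.leadingCoeffD_ne_zero hg)

lemma natDegD_mul {f g : S} (hf : f ≠ 0) (hg : g ≠ 0) :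
    R.natDegD (f * g) = R.natDegD f + R.natDegD g :=
  R.natDegD_eq_of_degD_eq (R.degD_mul hf hg)

lemma leadingCoeffD_mul {f g : S} (hf : f ≠ 0) (hg : g ≠ 0) :
    R.leadingCoeffD (f * g) = R.leadingCoeffD f * R.leadingCoeffD g := by
  rw [leadingCoeffD, R.natDegD_mul hf hg, R.coeff_mul_natDegD_add]

lemma degD_le_degD_mul_left {f : S} (hf : f ≠ 0) (g : S) : R.degD g ≤ R.degD (f * g) := by
  rcases eq_or_ne g 0 with rfl | hg
  · simp
  · rw [R.degD_mul hf hg, R.degD_eq_natDegD hg]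
    exact_mod_cast Nat.le_add_left _ _

include R in
theorem noZeroDivisors : NoZeroDivisors S := by
  refine ⟨fun {f g} hfg => ?_⟩
  by_contra! h
  have hdeg := R.degD_mul h.1 h.2
  rw [hfg, R.degD_zero] at hdeg
  exact WithBot.bot_ne_coe hdeg

include R in
theorem nontrivial : Nontrivial S := by
  refine ⟨1, 0, fun h => one_ne_zero (α := K) ?_⟩
  have h1 : R.coeff 1 0 = 1 := by simpa using R.coeff_ι 1 0
  simpa [h1] using congrArg (R.coeff · 0) h

lemma eq_one_of_mul_eq_one_of_monic {u v g : S} (huv : u * v = 1) (hg : R.Monic g)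
    (hug : R.Monic (u * g)) : u = 1 := by
  have := R.nontrivial
  have hu : u ≠ 0 := left_ne_zero_of_mul_eq_one huv
  have hu0 : R.natDegD u = 0 := by
    have := R.natDegD_mul hu (right_ne_zero_of_mul_eq_one huv)
    rw [huv, R.natDegD_one] at this
    omega
  have hlc : R.coeff u 0 = 1 := by
    have := R.leadingCoeffD_mul hu (R.ne_zero_of_monic hg)
    rw [show R.leadingCoeffD (u * g) = 1 from hug, show R.leadingCoeffD g = 1 from hg,
      mul_one, leadingCoeffD, hu0] at this
    exact this.symm
  rw [R.eq_ι_coeff_zero hu0, hlc, map_one]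

theorem eq_zero_of_degD_mul_apply_lt {m : Type*} [LinearOrder m] [Fintype m] [WellFoundedLT m]
    {E G : Matrix m m S} (hG : G.IsUpperTriangular)
    (hEG : ∀ i j, R.degD ((E * G) i j) < R.degD (G j j)) : E = 0 := by
  ext i j
  induction j using WellFoundedLT.induction with
  | _ j ih =>
    have hcol := Matrix.mul_apply_eq_of_isUpperTriangular (X := E) hG (fun l hl => ih l hl)
    by_contra hne
    exact (hEG i j).not_ge (hcol ▸ R.degD_le_degD_mul_left hne (G j j))

end IsDomain

namespace HermiteForm

variable {R} {n : ℕ} {H G : Matrix (Fin n) (Fin n) S}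

theorem isUpperTriangular (hH : R.HermiteForm H) : H.IsUpperTriangular :=
  fun i j h => hH.1 i j h

theorem diag_ne_zero [Nontrivial K] (hH : R.HermiteForm H) (i : Fin n) : H i i ≠ 0 :=
  R.ne_zero_of_monic (hH.2.1 i)

theorem degD_lt_diag [Nontrivial K] (hH : R.HermiteForm H) {i j : Fin n} (hij : i ≠ j) :
    R.degD (H i j) < R.degD (H j j) := by
  rcases hij.lt_or_gt with h | h
  · exact hH.2.2 i j h
  · rw [hH.1 i j h, R.degD_zero]
    exact R.bot_lt_degD (hH.diag_ne_zero j)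

theorem eq_one_of_mul_eq [IsDomain K] (hH : R.HermiteForm H) (hG : R.HermiteForm G)
    (W : (Matrix (Fin n) (Fin n) S)ˣ) (hW : (W : Matrix (Fin n) (Fin n) S) * G = H) :
    (W : Matrix (Fin n) (Fin n) S) = 1 := by
  have := R.noZeroDivisors
  have hWu : (W : Matrix (Fin n) (Fin n) S).IsUpperTriangular :=
    Matrix.isUpperTriangular_of_mul_eq hW hG.isUpperTriangular hG.diag_ne_zero
      hH.isUpperTriangular
  have hWinvu : (↑W⁻¹ : Matrix (Fin n) (Fin n) S).IsUpperTriangular :=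
    Matrix.isUpperTriangular_of_mul_eq (by rw [← hW, W.inv_mul_cancel_left]) hH.isUpperTriangular
      hH.diag_ne_zero hG.isUpperTriangular
  have hdiag (i : Fin n) : (W : Matrix (Fin n) (Fin n) S) i i = 1 :=
    R.eq_one_of_mul_eq_one_of_monic
      (by rw [← hWu.mul_apply_self hWinvu, W.mul_inv, Matrix.one_apply_eq]) (hG.2.1 i)
      (by rw [← hWu.mul_apply_self hG.isUpperTriangular, hW]; exact hH.2.1 i)
  have hHG (j : Fin n) : H j j = G j j := by
    rw [← hW, hWu.mul_apply_self hG.isUpperTriangular, hdiag, one_mul]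
  rw [← sub_eq_zero]
  refine R.eq_zero_of_degD_mul_apply_lt hG.isUpperTriangular fun i j => ?_
  rw [sub_mul, hW, one_mul, Matrix.sub_apply]
  rcases eq_or_ne i j with rfl | hij
  · rw [hHG, sub_self, R.degD_zero]
    exact R.bot_lt_degD (hG.diag_ne_zero i)
  · exact R.degD_sub_lt (hHG j ▸ hH.degD_lt_diag hij) (hG.degD_lt_diag hij)

end HermiteForm

end DiffPolyRing

theorem hermite_form_unique_general {F : Type} [Field F] {S : Type} [Ring S]
    (δ : RatFunc F → RatFunc F)
    (R : DiffPolyRing (RatFunc F) S δ) {n : ℕ}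
    (A U V H G : Matrix (Fin n) (Fin n) S)
    (hU : IsUnit U) (hV : IsUnit V)
    (hUA : U * A = H) (hVA : V * A = G)
    (hH : R.HermiteForm H) (hG : R.HermiteForm G) :
    H = G ∧ U = V := by
  obtain ⟨U, rfl⟩ := hU
  obtain ⟨V, rfl⟩ := hV
  have hW : ((U * V⁻¹ : (Matrix (Fin n) (Fin n) S)ˣ) : Matrix (Fin n) (Fin n) S) * G = H := by
    rw [← hVA, ← hUA, Units.val_mul, mul_assoc, V.inv_mul_cancel_left]
  have hW1 := hH.eq_one_of_mul_eq hG _ hW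
  refine ⟨by rw [← hW, hW1, one_mul], ?_⟩
  rw [mul_inv_eq_one.1 (Units.val_eq_one.1 hW1)]

/-- uniqueness of the Hermite form and of the unimodular multiplier. -/
theorem hermite_form_unique {F : Type} [Field F] [CharZero F] {S : Type} [Ring S]
    (δ : RatFunc F → RatFunc F)
    (hδadd : ∀ a b : RatFunc F, δ (a + b) = δ a + δ b)
    (hδmul : ∀ a b : RatFunc F, δ (a * b) = a * δ b + δ a * b)
    (R : DiffPolyRing (RatFunc F) S δ) {n : ℕ}
    (A U V H G : Matrix (Fin n) (Fin n) S)
    (hA : DiffPolyRing.FullRowRank A)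
    (hU : IsUnit U) (hV : IsUnit V)
    (hUA : U * A = H) (hVA : V * A = G)
    (hH : R.HermiteForm H) (hG : R.HermiteForm G) :
    H = G ∧ U = V :=
  hermite_form_unique_general δ R A U V H G hU hV hUA hVA hH hG
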